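/- arXiv:0811.3847 — 3 statements merged into one kernel-verified Lean document; each statement's English description precedes it below -/
import Mathlib

section
/- Let ν ∈ ℂ and set α = ν/2 − 1/4. Suppose q is holomorphic on an open set Ω ⊆ ℂ and satisfies the second Painlevé equation q''(s) = 2 q(s)³ + s q(s) − ν for all s ∈ Ω. Define U(s) = q(s)² + q'(s) + s/2 on Ω, and u(s) = 2^{−1/3} U(−2^{1/3} s) for those s ∈ ℂ with −2^{1/3} s ∈ Ω. Then at every such point s with u(s) ≠ 0, u satisfies the thirty-fourth Painlevé equation u''(s) = 4 u(s)² + 2 s u(s) + (u'(s)² − (2α)²)/(2 u(s)). -/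
/-!
Set `β = ν − 1/2`. On `Ω`, Painlevé II turns `U = q² + q' + s/2` into a solution of the Riccati
equation `U' = 2qU − β`. Differentiating once more and eliminating `q` through
`qU = (U' + β)/2` and `q' = U − q² − s/2` gives `2UU'' = 4U³ − 2sU² + U'² − β²`, which is
Painlevé XXXIV in an unnormalised form. The scaling `u(s) = c⁻¹ U(−cs)` with `c³ = 2` brings it
to the normalisation `u'' = 4u² + 2su + (u'² − (2α)²)/(2u)`, where `2α = β`.
-/

open Topology

noncomputable def cbrt2 : ℝ := (2 : ℝ) ^ ((1 : ℝ) / 3)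

theorem cbrt2_pow_three : cbrt2 ^ 3 = 2 := by
  rw [cbrt2, one_div]
  exact Real.rpow_inv_natCast_pow (by norm_num) (by norm_num)

section Rescaling

variable {𝕜 : Type*} [NontriviallyNormedField 𝕜] (a b : 𝕜) (f : 𝕜 → 𝕜)

theorem deriv_const_mul_comp_mul :
    deriv (fun x => a * f (b * x)) = fun x => a * b * deriv f (b * x) := by
  ext x
  rw [deriv_const_mul_field, deriv_comp_mul_left b f x, smul_eq_mul, mul_assoc]

theorem deriv_deriv_const_mul_comp_mul (x : 𝕜) :
    deriv (deriv fun x => a * f (b * x)) x = a * b ^ 2 * deriv (deriv f) (b * x) := by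
  rw [deriv_const_mul_comp_mul, deriv_const_mul_field, deriv_comp_mul_left b (deriv f) x,
    smul_eq_mul]
  ring

end Rescaling

section PainleveII

variable {ν : ℂ} {Ω : Set ℂ} {q U : ℂ → ℂ}

theorem hasDerivAt_riccati_of_painleveII (hΩ : IsOpen Ω) (hq : DifferentiableOn ℂ q Ω)
    (hode : ∀ s ∈ Ω, deriv (deriv q) s = 2 * q s ^ 3 + s * q s - ν)
    (hU : ∀ s, U s = q s ^ 2 + deriv q s + s / 2) {t : ℂ} (ht : t ∈ Ω) :
    HasDerivAt U (2 * q t * U t - (ν - 1 / 2)) t := by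
  have hqa : AnalyticOnNhd ℂ q Ω := hq.analyticOnNhd hΩ
  have hq' : HasDerivAt q (deriv q t) t := (hqa t ht).differentiableAt.hasDerivAt
  have hq'' : HasDerivAt (deriv q) (deriv (deriv q) t) t :=
    (hqa.deriv t ht).differentiableAt.hasDerivAt
  rw [funext hU]
  refine (((hq'.pow 2).add hq'').add ((hasDerivAt_id t).div_const 2)).congr_deriv ?_
  rw [hode t ht]
  beta_reduce
  ring

theorem painleveXXXIV_of_painleveII (hΩ : IsOpen Ω) (hq : DifferentiableOn ℂ q Ω)
    (hode : ∀ s ∈ Ω, deriv (deriv q) s = 2 * q s ^ 3 + s * q s - ν)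
    (hU : ∀ s, U s = q s ^ 2 + deriv q s + s / 2) {t : ℂ} (ht : t ∈ Ω) :
    2 * U t * deriv (deriv U) t =
      4 * U t ^ 3 - 2 * t * U t ^ 2 + deriv U t ^ 2 - (ν - 1 / 2) ^ 2 := by
  have hU' : ∀ s ∈ Ω, HasDerivAt U (2 * q s * U s - (ν - 1 / 2)) s := fun s hs =>
    hasDerivAt_riccati_of_painleveII hΩ hq hode hU hs
  have hderiv_eq : deriv U =ᶠ[𝓝 t] fun s => 2 * q s * U s - (ν - 1 / 2) := by
    filter_upwards [hΩ.mem_nhds ht] with s hs using (hU' s hs).deriv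
  have hq' : HasDerivAt q (deriv q t) t :=
    ((hq.analyticOnNhd hΩ) t ht).differentiableAt.hasDerivAt
  have hU'' : deriv (deriv U) t = 2 * deriv q t * U t + 2 * q t * deriv U t := by
    have h : HasDerivAt (fun s => 2 * q s * U s - (ν - 1 / 2))
        (2 * deriv q t * U t + 2 * q t * deriv U t) t := by
      refine (((hq'.const_mul 2).mul (hU' t ht)).sub_const _).congr_deriv ?_
      rw [(hU' t ht).deriv]
    rw [hderiv_eq.deriv_eq, h.deriv]
  rw [hU'', (hU' t ht).deriv]
  linear_combination (-4 * U t ^ 2) * hU t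

end PainleveII

/-- If `q` is holomorphic on an open set `Ω ⊆ ℂ` and solves Painlevé II
`q'' = 2q³ + sq − ν`, then `u(s) = 2^{-1/3} (q² + q' + s/2)(−2^{1/3} s)` solves
Painlevé XXXIV `u'' = 4u² + 2su + ((u')² − (2α)²)/(2u)` with `α = ν/2 − 1/4`,
at every point where it is defined and nonzero. -/
theorem stmt0 (ν α : ℂ) (hα : α = ν / 2 - 1 / 4)
    (Ω : Set ℂ) (hΩ : IsOpen Ω) (q : ℂ → ℂ)
    (hq : DifferentiableOn ℂ q Ω)
    (hode : ∀ s ∈ Ω, deriv (deriv q) s = 2 * q s ^ 3 + s * q s - ν)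
    (U u : ℂ → ℂ)
    (hU : ∀ s : ℂ, U s = q s ^ 2 + deriv q s + s / 2)
    (hu : ∀ s : ℂ, u s = ((cbrt2 : ℝ) : ℂ)⁻¹ * U (-((cbrt2 : ℝ) : ℂ) * s)) :
    ∀ s : ℂ, -((cbrt2 : ℝ) : ℂ) * s ∈ Ω → u s ≠ 0 →
      deriv (deriv u) s =
        4 * u s ^ 2 + 2 * s * u s + ((deriv u s) ^ 2 - (2 * α) ^ 2) / (2 * u s) := by
  intro s hs hu0
  have hc3 : ((cbrt2 : ℝ) : ℂ) ^ 3 = 2 := by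
    rw [← Complex.ofReal_pow, cbrt2_pow_three, Complex.ofReal_ofNat]
  set c : ℂ := ((cbrt2 : ℝ) : ℂ)
  have hc0 : c ≠ 0 := by rintro hc; norm_num [hc] at hc3
  have hP34 := painleveXXXIV_of_painleveII hΩ hq hode hU hs
  have hUc : U (-c * s) = c * u s := by rw [hu, mul_inv_cancel_left₀ hc0]
  rw [funext hu, deriv_deriv_const_mul_comp_mul, deriv_const_mul_comp_mul, ← funext hu, hα]
  rw [hUc] at hP34
  simp only [neg_mul] at hP34 ⊢
  field_simp
  linear_combination 16 * hP34 + (64 * u s ^ 3 + 32 * s * u s ^ 2) * hc3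
end

section
/- For every real x > 0, the improper integral ∫₁^∞ (log t)/(√(t−1)·(t+x)) dt converges and equals (π log x)/√(x+1) + (π/√(x+1)) · log((√(x+1)+1)/(√(x+1)−1)). -/
/-!
The substitution `t = 1 + u²` turns the integral into `2 ∫₀^∞ log (1 + u²) / (u² + a²) du` with
`a = √(x + 1)`, and since `x = (a - 1)(a + 1)` the right-hand side is `(2π / a) log (1 + a)`.
The remaining integral is computed by Feynman's trick in integrated form:
`log (1 + u²) = ∫₀¹ 2bu² / (1 + b²u²) db`; after exchanging the order of integration (the
integrand is nonnegative) the inner integral is `π / (1 + ab)` by partial fractions, and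
`∫₀¹ π / (1 + ab) db = (π / a) log (1 + a)`.
-/

open MeasureTheory Real
open Set Filter

lemma hasDerivAt_inv_mul_arctan_div {c : ℝ} (hc : 0 < c) (u : ℝ) :
    HasDerivAt (fun u => c⁻¹ * arctan (u / c)) (u ^ 2 + c ^ 2)⁻¹ u := by
  refine ((((hasDerivAt_id u).div_const c).arctan).const_mul c⁻¹).congr_deriv ?_
  field_simp
  simp only [id]
  ring

lemma tendsto_inv_mul_arctan_div {c : ℝ} (hc : 0 < c) :
    Tendsto (fun u => c⁻¹ * arctan (u / c)) atTop (nhds (c⁻¹ * (π / 2))) :=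
  ((tendsto_arctan_atTop.mono_right nhdsWithin_le_nhds).comp
    (tendsto_id.atTop_div_const hc)).const_mul _

lemma integrableOn_Ioi_inv_sq_add_sq {c : ℝ} (hc : 0 < c) :
    IntegrableOn (fun u : ℝ => (u ^ 2 + c ^ 2)⁻¹) (Ioi 0) :=
  integrableOn_Ioi_deriv_of_nonneg' (fun u _ => hasDerivAt_inv_mul_arctan_div hc u)
    (fun u _ => by positivity) (tendsto_inv_mul_arctan_div hc)

lemma integral_Ioi_inv_sq_add_sq {c : ℝ} (hc : 0 < c) :
    ∫ u in Ioi 0, (u ^ 2 + c ^ 2)⁻¹ = π / (2 * c) := by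
  rw [integral_Ioi_of_hasDerivAt_of_tendsto' (fun u _ => hasDerivAt_inv_mul_arctan_div hc u)
    (integrableOn_Ioi_inv_sq_add_sq hc) (tendsto_inv_mul_arctan_div hc)]
  simp only [zero_div, arctan_zero, mul_zero, sub_zero]
  ring

lemma sq_div_sq_add_sq_mul_sq_add_sq_eq {a c : ℝ} (ha : 0 < a) (hc : 0 < c) (hac : a ≠ c)
    (u : ℝ) :
    u ^ 2 / ((u ^ 2 + a ^ 2) * (u ^ 2 + c ^ 2)) =
      (a ^ 2 - c ^ 2)⁻¹ * (a ^ 2 * (u ^ 2 + a ^ 2)⁻¹ - c ^ 2 * (u ^ 2 + c ^ 2)⁻¹) := by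
  have : a ^ 2 - c ^ 2 ≠ 0 :=
    sub_ne_zero.mpr ((pow_left_inj₀ ha.le hc.le two_ne_zero).not.mpr hac)
  field_simp
  ring

lemma integrableOn_Ioi_sq_div_sq_add_sq_mul_sq_add_sq {a c : ℝ} (ha : 0 < a) (hc : 0 < c)
    (hac : a ≠ c) :
    IntegrableOn (fun u : ℝ => u ^ 2 / ((u ^ 2 + a ^ 2) * (u ^ 2 + c ^ 2))) (Ioi 0) := by
  simp_rw [sq_div_sq_add_sq_mul_sq_add_sq_eq ha hc hac]
  exact (((integrableOn_Ioi_inv_sq_add_sq ha).const_mul _).sub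
    ((integrableOn_Ioi_inv_sq_add_sq hc).const_mul _)).const_mul _

lemma integral_Ioi_sq_div_sq_add_sq_mul_sq_add_sq {a c : ℝ} (ha : 0 < a) (hc : 0 < c)
    (hac : a ≠ c) :
    ∫ u in Ioi 0, u ^ 2 / ((u ^ 2 + a ^ 2) * (u ^ 2 + c ^ 2)) = π / (2 * (a + c)) := by
  simp_rw [sq_div_sq_add_sq_mul_sq_add_sq_eq ha hc hac]
  rw [integral_const_mul, integral_sub ((integrableOn_Ioi_inv_sq_add_sq ha).const_mul _)
    ((integrableOn_Ioi_inv_sq_add_sq hc).const_mul _), integral_const_mul, integral_const_mul,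
    integral_Ioi_inv_sq_add_sq ha, integral_Ioi_inv_sq_add_sq hc]
  have hsq : a ^ 2 - c ^ 2 = (a - c) * (a + c) := by ring
  have : a - c ≠ 0 := sub_ne_zero.mpr hac
  rw [hsq]
  field_simp

lemma log_one_add_sq_eq_integral (u : ℝ) :
    log (1 + u ^ 2) = ∫ b in (0 : ℝ)..1, 2 * b * u ^ 2 / (1 + (b * u) ^ 2) := by
  have hderiv (b : ℝ) : HasDerivAt (fun b => log (1 + (b * u) ^ 2))
      (2 * b * u ^ 2 / (1 + (b * u) ^ 2)) b := by
    have hsq : HasDerivAt (fun b => 1 + (b * u) ^ 2) (2 * b * u ^ 2) b := by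
      simpa [mul_pow] using ((hasDerivAt_pow 2 b).mul_const (u ^ 2)).const_add 1
    exact hsq.log (by positivity)
  rw [intervalIntegral.integral_eq_sub_of_hasDerivAt (fun b _ => hderiv b)
    ((Continuous.div (by fun_prop) (by fun_prop) fun b => by positivity).intervalIntegrable _ _)]
  simp

lemma integral_pi_div_one_add_mul {a : ℝ} (ha : 0 < a) :
    ∫ b in (0 : ℝ)..1, π / (1 + a * b) = π / a * log (1 + a) := by
  have hpos : ∀ b ∈ uIcc (0 : ℝ) 1, 1 + a * b ≠ 0 := by
    intro b hb
    rw [uIcc_of_le zero_le_one] at hb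
    nlinarith [hb.1]
  have hderiv : ∀ b ∈ uIcc (0 : ℝ) 1,
      HasDerivAt (fun b => π / a * log (1 + a * b)) (π / (1 + a * b)) b := by
    intro b hb
    refine ((((hasDerivAt_id b).const_mul a).const_add 1).log (hpos b hb)).const_mul _
      |>.congr_deriv ?_
    have := hpos b hb
    simp only [id]
    field_simp
  rw [intervalIntegral.integral_eq_sub_of_hasDerivAt hderiv
    (ContinuousOn.intervalIntegrable (continuousOn_const.div (by fun_prop) hpos))]
  simp

lemma two_mul_mul_sq_div_one_add_mul_sq_div_sq_add_sq_eq {a b : ℝ} (hb : 0 < b) (u : ℝ) :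
    2 * b * u ^ 2 / (1 + (b * u) ^ 2) / (u ^ 2 + a ^ 2) =
      2 / b * (u ^ 2 / ((u ^ 2 + a ^ 2) * (u ^ 2 + b⁻¹ ^ 2))) := by
  field_simp
  ring

lemma integrableOn_Ioi_two_mul_mul_sq_div_one_add_mul_sq_div_sq_add_sq {a b : ℝ} (ha : 0 < a)
    (hb : 0 < b) (hab : a * b ≠ 1) :
    IntegrableOn (fun u => 2 * b * u ^ 2 / (1 + (b * u) ^ 2) / (u ^ 2 + a ^ 2)) (Ioi 0) := by
  have hab' : a ≠ b⁻¹ := fun h => hab (by rw [h, inv_mul_cancel₀ hb.ne'])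
  simp_rw [two_mul_mul_sq_div_one_add_mul_sq_div_sq_add_sq_eq hb]
  exact (integrableOn_Ioi_sq_div_sq_add_sq_mul_sq_add_sq ha (inv_pos.mpr hb) hab').const_mul _

lemma integral_Ioi_two_mul_mul_sq_div_one_add_mul_sq_div_sq_add_sq {a b : ℝ} (ha : 0 < a)
    (hb : 0 < b) (hab : a * b ≠ 1) :
    ∫ u in Ioi 0, 2 * b * u ^ 2 / (1 + (b * u) ^ 2) / (u ^ 2 + a ^ 2) = π / (1 + a * b) := by
  have hab' : a ≠ b⁻¹ := fun h => hab (by rw [h, inv_mul_cancel₀ hb.ne'])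
  simp_rw [two_mul_mul_sq_div_one_add_mul_sq_div_sq_add_sq_eq hb]
  rw [integral_const_mul, integral_Ioi_sq_div_sq_add_sq_mul_sq_add_sq ha (inv_pos.mpr hb) hab']
  field_simp
  ring

lemma integrableOn_Ioi_log_one_add_sq_div_sq_add_sq_and_integral_eq {a : ℝ} (ha : 0 < a) :
    IntegrableOn (fun u => log (1 + u ^ 2) / (u ^ 2 + a ^ 2)) (Ioi 0) ∧
      ∫ u in Ioi 0, log (1 + u ^ 2) / (u ^ 2 + a ^ 2) = π / a * log (1 + a) := by
  set F : ℝ → ℝ → ℝ := fun u b => 2 * b * u ^ 2 / (1 + (b * u) ^ 2) / (u ^ 2 + a ^ 2)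
  have hinner (u : ℝ) : ∫ b in Ioc 0 1, F u b = log (1 + u ^ 2) / (u ^ 2 + a ^ 2) := by
    rw [integral_div, ← intervalIntegral.integral_of_le zero_le_one,
      ← log_one_add_sq_eq_integral]
  have hgood : ∀ᵐ b ∂volume.restrict (Ioc (0 : ℝ) 1),
      0 < b ∧ IntegrableOn (F · b) (Ioi 0) ∧ ∫ u in Ioi 0, F u b = π / (1 + a * b) := by
    -- the partial fractions degenerate at `b = a⁻¹`
    filter_upwards [ae_restrict_mem measurableSet_Ioc,
      ae_restrict_of_ae (volume.ae_ne a⁻¹)] with b hb hne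
    have hab : a * b ≠ 1 := fun h => hne (eq_inv_of_mul_eq_one_right h)
    exact ⟨hb.1, integrableOn_Ioi_two_mul_mul_sq_div_one_add_mul_sq_div_sq_add_sq ha hb.1 hab,
      integral_Ioi_two_mul_mul_sq_div_one_add_mul_sq_div_sq_add_sq ha hb.1 hab⟩
  have hF : Integrable (Function.uncurry F)
      ((volume.restrict (Ioi 0)).prod (volume.restrict (Ioc 0 1))) := by
    have hcont : Continuous (Function.uncurry F) :=
      Continuous.div (Continuous.div (by fun_prop) (by fun_prop) fun _ => by positivity)
        (by fun_prop) fun _ => by positivity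
    refine (integrable_prod_iff' hcont.aestronglyMeasurable).mpr
      ⟨hgood.mono fun b hb => hb.2.1, ?_⟩
    have hpos : ∀ b ∈ Icc (0 : ℝ) 1, 1 + a * b ≠ 0 := fun b hb => by nlinarith [hb.1]
    have hmarg : IntegrableOn (fun b => π / (1 + a * b)) (Ioc 0 1) :=
      (continuousOn_const.div (by fun_prop) hpos).integrableOn_Icc.mono_set Ioc_subset_Icc_self
    refine hmarg.congr_fun_ae ?_
    filter_upwards [hgood] with b hb
    rw [← hb.2.2]
    have hb0 := hb.1
    exact integral_congr_ae (Eventually.of_forall fun u => (norm_of_nonneg (by positivity)).symm)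
  refine ⟨?_, ?_⟩
  · simpa only [IntegrableOn, Function.uncurry_apply_pair, hinner] using hF.integral_prod_left
  · calc ∫ u in Ioi 0, log (1 + u ^ 2) / (u ^ 2 + a ^ 2)
        = ∫ u in Ioi 0, ∫ b in Ioc 0 1, F u b := by simp only [hinner]
      _ = ∫ b in Ioc 0 1, ∫ u in Ioi 0, F u b := integral_integral_swap hF
      _ = ∫ b in Ioc 0 1, π / (1 + a * b) := integral_congr_ae (hgood.mono fun b hb => hb.2.2)
      _ = π / a * log (1 + a) := by
        rw [← intervalIntegral.integral_of_le zero_le_one, integral_pi_div_one_add_mul ha]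

lemma image_one_add_sq_Ioi_zero : (fun u : ℝ => 1 + u ^ 2) '' Ioi 0 = Ioi 1 := by
  ext t
  constructor
  · rintro ⟨u, hu, rfl⟩
    exact lt_add_of_pos_right 1 (pow_pos (mem_Ioi.mp hu) 2)
  · intro ht
    refine ⟨√(t - 1), sqrt_pos.mpr (sub_pos.mpr ht), ?_⟩
    simp only [sq_sqrt (sub_pos.mpr ht).le, add_sub_cancel]

section OneAddSq

variable {E : Type*} [NormedAddCommGroup E] [NormedSpace ℝ E]

lemma hasDerivWithinAt_one_add_sq (u : ℝ) (s : Set ℝ) :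
    HasDerivWithinAt (fun u : ℝ => 1 + u ^ 2) (2 * u) s u := by
  simpa using ((hasDerivAt_pow 2 u).const_add 1).hasDerivWithinAt

lemma injOn_one_add_sq_Ioi_zero : InjOn (fun u : ℝ => 1 + u ^ 2) (Ioi 0) := by
  intro u hu v hv huv
  exact (pow_left_inj₀ (le_of_lt hu) (le_of_lt hv) two_ne_zero).mp (add_left_cancel huv)

lemma integrableOn_Ioi_one_iff_comp_one_add_sq (g : ℝ → E) :
    IntegrableOn g (Ioi 1) ↔ IntegrableOn (fun u => (2 * u) • g (1 + u ^ 2)) (Ioi 0) := by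
  rw [← image_one_add_sq_Ioi_zero, integrableOn_image_iff_integrableOn_abs_deriv_smul
    measurableSet_Ioi (fun u _ => hasDerivWithinAt_one_add_sq u _) injOn_one_add_sq_Ioi_zero]
  refine integrableOn_congr_fun (fun u hu => ?_) measurableSet_Ioi
  rw [abs_of_pos (mul_pos two_pos hu)]

lemma integral_Ioi_one_eq_integral_comp_one_add_sq (g : ℝ → E) :
    ∫ t in Ioi 1, g t = ∫ u in Ioi 0, (2 * u) • g (1 + u ^ 2) := by
  rw [← image_one_add_sq_Ioi_zero, integral_image_eq_integral_abs_deriv_smul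
    measurableSet_Ioi (fun u _ => hasDerivWithinAt_one_add_sq u _) injOn_one_add_sq_Ioi_zero]
  refine setIntegral_congr_fun measurableSet_Ioi (fun u hu => ?_)
  rw [abs_of_pos (mul_pos two_pos hu)]

end OneAddSq

/-- For real `x > 0`, the integral `∫₁^∞ (log t)/(√(t−1)(t+x)) dt` converges and equals
`(π log x)/√(x+1) + (π/√(x+1)) log((√(x+1)+1)/(√(x+1)−1))`. -/
theorem stmt7 (x : ℝ) (hx : 0 < x) :
    IntegrableOn (fun t : ℝ => Real.log t / (Real.sqrt (t - 1) * (t + x))) (Set.Ioi 1) ∧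
    ∫ t in Set.Ioi (1 : ℝ), Real.log t / (Real.sqrt (t - 1) * (t + x)) =
      Real.pi * Real.log x / Real.sqrt (x + 1) +
        (Real.pi / Real.sqrt (x + 1)) *
          Real.log ((Real.sqrt (x + 1) + 1) / (Real.sqrt (x + 1) - 1)) := by
  set a := √(x + 1)
  have ha2 : a ^ 2 = x + 1 := sq_sqrt (by linarith)
  have ha1 : 1 < a := by nlinarith [sqrt_nonneg (x + 1)]
  have ha0 : 0 < a := one_pos.trans ha1
  have hsubst : ∀ u ∈ Ioi (0 : ℝ),
      (2 * u) • (log (1 + u ^ 2) / (√(1 + u ^ 2 - 1) * (1 + u ^ 2 + x))) =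
        2 * (log (1 + u ^ 2) / (u ^ 2 + a ^ 2)) := by
    intro u hu
    rw [add_sub_cancel_left, sqrt_sq (le_of_lt hu), ha2, smul_eq_mul]
    have : (0 : ℝ) < u := hu
    field_simp
    ring
  obtain ⟨hint, hval⟩ := integrableOn_Ioi_log_one_add_sq_div_sq_add_sq_and_integral_eq ha0
  refine ⟨?_, ?_⟩
  · rw [integrableOn_Ioi_one_iff_comp_one_add_sq]
    exact IntegrableOn.congr_fun (hint.const_mul 2) (fun u hu => (hsubst u hu).symm)
      measurableSet_Ioi
  · rw [integral_Ioi_one_eq_integral_comp_one_add_sq,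
      setIntegral_congr_fun measurableSet_Ioi hsubst, integral_const_mul, hval]
    have hx_eq : x = (a - 1) * (a + 1) := by nlinarith
    rw [hx_eq, log_mul (by linarith) (by linarith), log_div (by linarith) (by linarith),
      add_comm 1 a]
    ring
end

section
/- Let g(z) = (2/3)(z−1)^{3/2} for z ∈ ℂ∖(−∞,1], using the principal branch −π < arg(z−1) < π. Then there exists a constant c > 0 such that Re g(z) ≤ −c |z| for every z ≠ 0 with arg z = 2π/3, and for every z ≠ 0 with arg z = −2π/3. -/
/-!
On both rays `w = z - 1` has `Re w = -|z|/2 - 1` and `(Im w)² = 3|z|²/4`. Write `√w = a + ib`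
with `a ≥ 0`. Then `Re w^{3/2} = Re (√w)³ = (2 Re w - |w|) a ≤ -(|z| + 2) a`, while
`Im w = 2ab` and `b² ≤ |w| ≤ |z| + 1` force `16 (|z| + 1) a² ≥ 3|z|²`, hence `2a(|z| + 2) ≥ |z|`.
So `c = 1/3` works.
-/

open Complex

namespace Complex

lemma re_sq_sub_im_sq_cpow_inv_two (w : ℂ) :
    (w ^ (2⁻¹ : ℂ)).re ^ 2 - (w ^ (2⁻¹ : ℂ)).im ^ 2 = w.re := by
  conv_rhs => rw [← cpow_ofNat_inv_pow w 2]
  simp only [sq, mul_re]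

lemma two_mul_re_mul_im_cpow_inv_two (w : ℂ) :
    2 * (w ^ (2⁻¹ : ℂ)).re * (w ^ (2⁻¹ : ℂ)).im = w.im := by
  conv_rhs => rw [← cpow_ofNat_inv_pow w 2]
  simp only [sq, mul_im]
  ring

lemma re_sq_add_im_sq_cpow_inv_two (w : ℂ) :
    (w ^ (2⁻¹ : ℂ)).re ^ 2 + (w ^ (2⁻¹ : ℂ)).im ^ 2 = ‖w‖ := by
  conv_rhs => rw [← cpow_ofNat_inv_pow w 2, norm_pow, Complex.sq_norm, normSq_apply]
  ring

lemma re_cpow_three_halves (w : ℂ) :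
    (w ^ (3 / 2 : ℂ)).re = (2 * w.re - ‖w‖) * (w ^ (2⁻¹ : ℂ)).re := by
  rcases eq_or_ne w 0 with rfl | hw
  · simp
  have hsplit : w ^ (3 / 2 : ℂ) = w * w ^ (2⁻¹ : ℂ) := by
    rw [show (3 / 2 : ℂ) = 1 + 2⁻¹ by norm_num, cpow_add _ _ hw, cpow_one]
  rw [hsplit, mul_re, ← re_sq_sub_im_sq_cpow_inv_two w, ← re_sq_add_im_sq_cpow_inv_two w,
    ← two_mul_re_mul_im_cpow_inv_two w]
  ring

lemma im_sq_le_four_mul_norm_mul_re_cpow_inv_two_sq (w : ℂ) :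
    w.im ^ 2 ≤ 4 * ‖w‖ * (w ^ (2⁻¹ : ℂ)).re ^ 2 := by
  rw [← two_mul_re_mul_im_cpow_inv_two, ← re_sq_add_im_sq_cpow_inv_two]
  nlinarith [mul_nonneg (sq_nonneg (w ^ (2⁻¹ : ℂ)).re) (sq_nonneg (w ^ (2⁻¹ : ℂ)).re)]

lemma re_eq_neg_norm_div_two_of_arg_eq {z : ℂ}
    (harg : z.arg = 2 * Real.pi / 3 ∨ z.arg = -(2 * Real.pi / 3)) : z.re = -(‖z‖ / 2) := by
  have hcos : Real.cos z.arg = -(1 / 2) := by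
    rcases harg with h | h <;>
      simp only [h, Real.cos_neg, show 2 * Real.pi / 3 = Real.pi - Real.pi / 3 by ring,
        Real.cos_pi_sub, Real.cos_pi_div_three]
  rw [← norm_mul_cos_arg z, hcos]
  ring

end Complex

lemma le_two_mul_mul_add_two {a r : ℝ} (ha : 0 ≤ a)
    (h : 3 * r ^ 2 ≤ 16 * (r + 1) * a ^ 2) : r ≤ 2 * a * (r + 2) := by
  nlinarith [sq_nonneg (r - 2 * a * (r + 2))]

/-- There is `c > 0` such that `Re((2/3)(z−1)^{3/2}) ≤ −c|z|` (principal branch) for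
every `z ≠ 0` on the rays `arg z = 2π/3` and `arg z = −2π/3`. -/
theorem stmt15 : ∃ c > (0 : ℝ), ∀ z : ℂ, z ≠ 0 →
    (Complex.arg z = 2 * Real.pi / 3 ∨ Complex.arg z = -(2 * Real.pi / 3)) →
    ((2 / 3 : ℂ) * (z - 1) ^ ((3 : ℂ) / 2)).re ≤ -c * ‖z‖ := by
  refine ⟨1 / 3, by norm_num, fun z _ harg => ?_⟩
  set r := ‖z‖
  set a := ((z - 1) ^ (2⁻¹ : ℂ)).re
  have hre : (z - 1).re = -(r / 2) - 1 := by
    rw [sub_re, one_re, re_eq_neg_norm_div_two_of_arg_eq harg]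
  have him : (z - 1).im ^ 2 = 3 / 4 * r ^ 2 := by
    rw [sub_im, one_im, sub_zero, ← sq_norm_sub_sq_re, re_eq_neg_norm_div_two_of_arg_eq harg]
    ring
  have hnorm : ‖z - 1‖ ≤ r + 1 := (norm_sub_le z 1).trans_eq (by rw [norm_one])
  have ha : 0 ≤ a := by simp only [a, cpow_inv_two_re]; positivity
  have him_le : (z - 1).im ^ 2 ≤ 4 * ‖z - 1‖ * a ^ 2 :=
    im_sq_le_four_mul_norm_mul_re_cpow_inv_two_sq (z - 1)
  have hkey : r ≤ 2 * a * (r + 2) := le_two_mul_mul_add_two ha <| by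
    nlinarith [sq_nonneg a]
  have hg : ((2 / 3 : ℂ) * (z - 1) ^ ((3 : ℂ) / 2)).re =
      2 / 3 * ((2 * (z - 1).re - ‖z - 1‖) * a) := by
    rw [show (2 / 3 : ℂ) = ((2 / 3 : ℝ) : ℂ) by norm_num, re_ofReal_mul, re_cpow_three_halves]
  rw [hg, hre]
  nlinarith [mul_nonneg (norm_nonneg (z - 1)) ha]
end
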